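/- Let S : ℤ → ℤ[x] be defined by S_{-1} = 0, S_0 = 1, S_{k+1} = x·S_k − S_{k-1}, and define σ_n ∈ ℤ[x] by σ_n = S_{n-1} if n > 0, σ_0 = 0, σ_n = −σ_{−n} if n < 0. Let P9 = −8 + 4x + 16x^2 − 10x^3 − 16x^4 + 4x^5 + 8x^6 + 2x^7 and R8 = 4 + 6x − 10x^2 − 14x^3 + 4x^4 + 8x^5 + 2x^6 in ℤ[x], and for integers p, q set Q(p,q) = −σ_p·σ_q·P9 + (σ_{p+1}·σ_{q+1} + σ_{p−1}·σ_{q−1})·R8 + 1. If p·q < 0, then the degree of the polynomial Q(p,q) equals |p| + |q| + 5. -/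

import Mathlib

open Polynomial in
/-- \`P9 = Q(8_9) - 1 = -8 + 4x + 16x² - 10x³ - 16x⁴ + 4x⁵ + 8x⁶ + 2x⁷\`. -/
noncomputable def kanenobuP9 : Polynomial ℤ :=
  -8 + 4 * X + 16 * X ^ 2 - 10 * X ^ 3 - 16 * X ^ 4 + 4 * X ^ 5 + 8 * X ^ 6 + 2 * X ^ 7

open Polynomial in
/-- \`R8 = (Q(8_8) - 1)/x = 4 + 6x - 10x² - 14x³ + 4x⁴ + 8x⁵ + 2x⁶\`. -/
noncomputable def kanenobuR8 : Polynomial ℤ :=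
  4 + 6 * X - 10 * X ^ 2 - 14 * X ^ 3 + 4 * X ^ 4 + 8 * X ^ 5 + 2 * X ^ 6

/-!
The recurrence makes `S` the rescaled Chebyshev polynomial `Chebyshev.S ℤ` on `n ≥ -1`, which
is monic of degree `n` for `n ≥ 0`; oddness of `σ` then forces `σ n = Chebyshev.S ℤ (n - 1)`
for all `n`, a polynomial of degree `|n| - 1` that vanishes only at `n = 0`. When `p` and `q`
have opposite signs, `|p ± 1| + |q ± 1| = |p| + |q|`, so the `R8` term has degree at most
`|p| + |q| - 2 + 6`, one less than the exact degree `|p| + |q| - 2 + 7` of the `P9` term.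
-/

open Polynomial

namespace Polynomial.Chebyshev

variable (R : Type*) [CommRing R]

theorem eq_S_of_recurrence {f : ℤ → R[X]} (hneg_one : f (-1) = 0) (h₀ : f 0 = 1)
    (hrec : ∀ k : ℤ, 0 ≤ k → f (k + 1) = X * f k - f (k - 1)) {n : ℤ} (hn : -1 ≤ n) :
    f n = S R n := by
  obtain ⟨m, rfl⟩ : ∃ m : ℕ, n = m - 1 := ⟨(n + 1).toNat, by omega⟩
  induction m using Nat.twoStepInduction with
  | zero => simpa using hneg_one
  | one => simpa using h₀
  | more m ih1 ih2 =>
    push_cast at ih2 ⊢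
    rw [show (m : ℤ) + 2 - 1 = m + 1 by ring, hrec m (by positivity), S_add_one]
    simp only [add_sub_cancel_right] at ih2
    rw [ih1 (by omega), ih2 (by omega)]

theorem eq_S_sub_one_of_odd {σ : ℤ → R[X]} (hpos : ∀ n : ℤ, 0 < n → σ n = S R (n - 1))
    (h₀ : σ 0 = 0) (hneg : ∀ n : ℤ, n < 0 → σ n = -σ (-n)) (n : ℤ) :
    σ n = S R (n - 1) := by
  rcases lt_trichotomy n 0 with h | rfl | h
  · rw [hneg n h, hpos (-n) (by omega), S_neg_sub_one, neg_neg]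
  · simp [h₀]
  · exact hpos n h

section Nontrivial

variable [Nontrivial R]

theorem degree_S_natCast (n : ℕ) : (S R n).degree = n := by
  induction n using Nat.twoStepInduction with
  | zero => simp
  | one => simp
  | more n ih1 ih2 =>
    push_cast at ih2 ⊢
    have h : (X * S R (n + 1)).degree = ↑(n + 2) := by
      rw [mul_comm, degree_mul_X, ih2]; norm_cast
    rw [S_add_two, degree_sub_eq_left_of_degree_lt] <;> rw [h]
    · norm_cast
    · rw [ih1]; norm_cast; omega

theorem monic_S_natCast (n : ℕ) : (S R n).Monic := by
  induction n using Nat.twoStepInduction with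
  | zero => simp
  | one => simp [monic_X]
  | more n ih1 ih2 =>
    push_cast at ih2 ⊢
    rw [S_add_two]
    refine (monic_X.mul ih2).sub_of_left ?_
    have h := degree_S_natCast R (n + 1)
    push_cast at h
    rw [mul_comm, degree_mul_X, h, degree_S_natCast]
    norm_cast
    omega

theorem natDegree_S_natCast (n : ℕ) : (S R n).natDegree = n :=
  natDegree_eq_of_degree_eq_some (degree_S_natCast R n)

theorem natDegree_S (n : ℤ) : (S R n).natDegree = (n + 1).natAbs - 1 := by
  obtain ⟨m, rfl | rfl⟩ := n.eq_nat_or_neg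
  · rw [natDegree_S_natCast]; omega
  · match m with
    | 0 => simp
    | 1 => simp
    | k + 2 =>
      rw [show -((k + 2 : ℕ) : ℤ) = -k - 2 by push_cast; ring, S_neg_sub_two, natDegree_neg,
        natDegree_S_natCast]
      omega

theorem S_ne_zero {n : ℤ} (hn : n ≠ -1) : S R n ≠ 0 := by
  obtain ⟨m, rfl | rfl⟩ := n.eq_nat_or_neg
  · exact (monic_S_natCast R m).ne_zero
  · match m with
    | 0 => simp
    | 1 => simp at hn
    | k + 2 =>
      rw [show -((k + 2 : ℕ) : ℤ) = -k - 2 by push_cast; ring, S_neg_sub_two, neg_ne_zero]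
      exact (monic_S_natCast R k).ne_zero

theorem natDegree_S_sub_one (n : ℤ) : (S R (n - 1)).natDegree = n.natAbs - 1 := by
  simp [natDegree_S]

end Nontrivial

end Polynomial.Chebyshev

noncomputable def kanenobuSigma (n : ℤ) : ℤ[X] := Chebyshev.S ℤ (n - 1)

noncomputable def kanenobuQ (p q : ℤ) : ℤ[X] :=
  -(kanenobuSigma p * kanenobuSigma q * kanenobuP9) +
    (kanenobuSigma (p + 1) * kanenobuSigma (q + 1) +
      kanenobuSigma (p - 1) * kanenobuSigma (q - 1)) * kanenobuR8 + 1

theorem natDegree_kanenobuP9 : kanenobuP9.natDegree = 7 := by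
  unfold kanenobuP9; compute_degree!

theorem natDegree_kanenobuR8 : kanenobuR8.natDegree = 6 := by
  unfold kanenobuR8; compute_degree!

theorem kanenobuSigma_ne_zero {n : ℤ} (hn : n ≠ 0) : kanenobuSigma n ≠ 0 :=
  Chebyshev.S_ne_zero ℤ (by omega)

theorem natDegree_kanenobuSigma_mul_le (m n : ℤ) :
    (kanenobuSigma m * kanenobuSigma n).natDegree ≤ m.natAbs + n.natAbs - 2 := by
  rcases eq_or_ne m 0 with rfl | hm
  · simp [kanenobuSigma]
  rcases eq_or_ne n 0 with rfl | hn
  · simp [kanenobuSigma]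
  refine natDegree_mul_le.trans ?_
  rw [kanenobuSigma, kanenobuSigma, Chebyshev.natDegree_S_sub_one, Chebyshev.natDegree_S_sub_one]
  omega

theorem natDegree_kanenobuSigma_mul {m n : ℤ} (hm : m ≠ 0) (hn : n ≠ 0) :
    (kanenobuSigma m * kanenobuSigma n).natDegree = m.natAbs + n.natAbs - 2 := by
  rw [natDegree_mul (kanenobuSigma_ne_zero hm) (kanenobuSigma_ne_zero hn), kanenobuSigma,
    kanenobuSigma, Chebyshev.natDegree_S_sub_one, Chebyshev.natDegree_S_sub_one]
  omega

theorem natDegree_kanenobuQ {p q : ℤ} (hpq : p * q < 0) :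
    (kanenobuQ p q).natDegree = p.natAbs + q.natAbs + 5 := by
  have hp : p ≠ 0 := by rintro rfl; simp at hpq
  have hq : q ≠ 0 := by rintro rfl; simp at hpq
  have hsigns := mul_neg_iff.mp hpq
  have hP9 : kanenobuP9 ≠ 0 := by
    intro h; simpa [h] using natDegree_kanenobuP9
  have hlead : (kanenobuSigma p * kanenobuSigma q * kanenobuP9).natDegree =
      p.natAbs + q.natAbs + 5 := by
    rw [natDegree_mul (mul_ne_zero (kanenobuSigma_ne_zero hp) (kanenobuSigma_ne_zero hq)) hP9,
      natDegree_kanenobuSigma_mul hp hq, natDegree_kanenobuP9]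
    omega
  have hlow : ((kanenobuSigma (p + 1) * kanenobuSigma (q + 1) +
      kanenobuSigma (p - 1) * kanenobuSigma (q - 1)) * kanenobuR8 + 1).natDegree ≤
        p.natAbs + q.natAbs + 4 := by
    have hplus : (kanenobuSigma (p + 1) * kanenobuSigma (q + 1)).natDegree ≤
        p.natAbs + q.natAbs - 2 :=
      (natDegree_kanenobuSigma_mul_le _ _).trans_eq (by omega)
    have hminus : (kanenobuSigma (p - 1) * kanenobuSigma (q - 1)).natDegree ≤
        p.natAbs + q.natAbs - 2 :=
      (natDegree_kanenobuSigma_mul_le _ _).trans_eq (by omega)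
    refine natDegree_add_le_of_degree_le ?_ (by simp)
    refine (natDegree_mul_le_of_le (natDegree_add_le_of_degree_le hplus hminus)
      natDegree_kanenobuR8.le).trans ?_
    omega
  unfold kanenobuQ
  rw [add_assoc, natDegree_add_eq_left_of_natDegree_lt] <;> rw [natDegree_neg, hlead]
  omega

/-- If `p * q < 0`, then the degree of Kanenobu's `Q` polynomial
`Q(p,q) = -σ_p σ_q P9 + (σ_{p+1} σ_{q+1} + σ_{p-1} σ_{q-1}) R8 + 1`
equals `|p| + |q| + 5`. -/
theorem kanenobu_Q_degree_of_neg (S σ : ℤ → Polynomial ℤ)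
    (hSm1 : S (-1) = 0) (hS0 : S 0 = 1)
    (hSrec : ∀ k : ℤ, 0 ≤ k → S (k + 1) = Polynomial.X * S k - S (k - 1))
    (hσpos : ∀ n : ℤ, 0 < n → σ n = S (n - 1)) (hσ0 : σ 0 = 0)
    (hσneg : ∀ n : ℤ, n < 0 → σ n = -σ (-n))
    (p q : ℤ) (hpq : p * q < 0) :
    (-(σ p * σ q * kanenobuP9) +
        (σ (p + 1) * σ (q + 1) + σ (p - 1) * σ (q - 1)) * kanenobuR8 + 1).natDegree =
      p.natAbs + q.natAbs + 5 := by
  have hS : ∀ n : ℤ, 0 < n → S (n - 1) = Chebyshev.S ℤ (n - 1) := fun n hn =>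
    Chebyshev.eq_S_of_recurrence ℤ hSm1 hS0 hSrec (by omega)
  have hσ : σ = kanenobuSigma := funext fun n =>
    Chebyshev.eq_S_sub_one_of_odd ℤ (fun n hn => (hσpos n hn).trans (hS n hn)) hσ0 hσneg n
  subst hσ
  exact natDegree_kanenobuQ hpq
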